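/- Let α ≥ 0, let ν ∈ ℝⁿ be a unit vector, x₀ ∈ ℝⁿ, and let v be twice continuously differentiable on an open neighborhood U of x₀ with v(x₀) = 0 and ∇v(x₀) = −ν. Suppose there is t₀ > 0 such that for every t ∈ (0, t₀): x₀ − tν ∈ U, v(x₀ − tν) > 0, ∇v(x₀ − tν) ≠ 0, and Δv(x₀ − tν) = (α/2) (1 − |∇v(x₀ − tν)|²) / v(x₀ − tν). Then lim_{t → 0⁺} div( ∇v/|∇v| )(x₀ − tν) = −(1 + α) ⟨ν, D²v(x₀) ν⟩. -/

import Mathlib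

/-!
Along the inward normal `t ↦ x₀ - tν` both `1 - |∇v|²` and `v` vanish at `t = 0`, with
derivatives `-2 v_νν(x₀)` and `1`; so the equation forces `Δv → -α v_νν(x₀)`. Writing
`div(∇v/|∇v|) = (Δv - ⟨n̂, D²v n̂⟩)/|∇v|` and using the continuity of `D²v`, with `n̂ → -ν` and
`|∇v| → 1`, the limit is `-α v_νν(x₀) - v_νν(x₀)`.
-/

open Topology

/-- The Laplacian of a function on `ℝⁿ`, as the sum of its pure second
partial derivatives. -/
noncomputable def lap {n : ℕ} (f : EuclideanSpace ℝ (Fin n) → ℝ)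
    (x : EuclideanSpace ℝ (Fin n)) : ℝ :=
  ∑ i : Fin n, fderiv ℝ (fun y => fderiv ℝ f y (EuclideanSpace.single i 1)) x
    (EuclideanSpace.single i 1)

/-- The divergence `div F = ∑ᵢ ∂_i F^i` of a vector field on `ℝⁿ`. -/
noncomputable def vdiv {n : ℕ} (F : EuclideanSpace ℝ (Fin n) → EuclideanSpace ℝ (Fin n))
    (x : EuclideanSpace ℝ (Fin n)) : ℝ :=
  ∑ i : Fin n, fderiv ℝ (fun y => F y i) x (EuclideanSpace.single i 1)

open Filter RealInnerProductSpace

theorem tendsto_div_nhdsNE_of_hasDerivAt {f g : ℝ → ℝ} {a f' g' : ℝ}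
    (hf : HasDerivAt f f' a) (hg : HasDerivAt g g' a) (hfa : f a = 0) (hga : g a = 0)
    (hg' : g' ≠ 0) : Tendsto (fun x => f x / g x) (𝓝[≠] a) (𝓝 (f' / g')) := by
  refine ((hasDerivAt_iff_tendsto_slope.mp hf).div
    (hasDerivAt_iff_tendsto_slope.mp hg) hg').congr' ?_
  filter_upwards [self_mem_nhdsWithin] with x hx
  rw [Pi.div_apply, slope_def_field, slope_def_field, hfa, hga, sub_zero, sub_zero,
    div_div_div_cancel_right₀ (sub_ne_zero.mpr hx)]

theorem DifferentiableAt.hasDerivAt_comp_sub_smul {E F : Type*} [NormedAddCommGroup E]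
    [NormedSpace ℝ E] [NormedAddCommGroup F] [NormedSpace ℝ F] {f : E → F} {x : E}
    (hf : DifferentiableAt ℝ f x) (w : E) :
    HasDerivAt (fun t : ℝ => f (x - t • w)) (-fderiv ℝ f x w) 0 := by
  have hline : HasDerivAt (fun t : ℝ => x - t • w) (-w) 0 := by
    simpa using ((hasDerivAt_id (0 : ℝ)).smul_const w).const_sub x
  have hf' : HasFDerivAt f (fderiv ℝ f x) (x - (0 : ℝ) • w) := by
    simpa using hf.hasFDerivAt
  simpa [Function.comp_def] using hf'.comp_hasDerivAt (0 : ℝ) hline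

theorem HasFDerivAt.inv_norm {G F : Type*} [NormedAddCommGroup G] [NormedSpace ℝ G]
    [NormedAddCommGroup F] [InnerProductSpace ℝ F] {f : G → F} {f' : G →L[ℝ] F} {x : G}
    (hf : HasFDerivAt f f' x) (hx : f x ≠ 0) :
    HasFDerivAt (fun y => ‖f y‖⁻¹) (-(‖f x‖ ^ 3)⁻¹ • (innerSL ℝ (f x)).comp f') x := by
  have hpos : 0 < ‖f x‖ := norm_pos_iff.mpr hx
  have hnorm : HasFDerivAt (fun y => ‖f y‖)
      ((1 / (2 * ‖f x‖)) • 2 • (innerSL ℝ (f x)).comp f') x := by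
    simpa [Real.sqrt_sq (norm_nonneg _)] using hf.norm_sq.sqrt (by positivity)
  refine ((hasDerivAt_inv hpos.ne').comp_hasFDerivAt x hnorm).congr_fderiv ?_
  ext w
  simp only [one_div, mul_inv_rev, neg_smul, neg_apply, smul_apply, ContinuousLinearMap.comp_apply,
    coe_innerSL_apply, nsmul_eq_mul, Nat.cast_ofNat, smul_eq_mul, neg_inj]
  field_simp

theorem ContDiffAt.continuousAt_inner_normalize_fderiv {F : Type*} [NormedAddCommGroup F]
    [InnerProductSpace ℝ F] {G : F → F} {x : F} (hG : ContDiffAt ℝ 1 G x) (hx : G x ≠ 0) :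
    ContinuousAt (fun y => ⟪‖G y‖⁻¹ • G y, fderiv ℝ G y (‖G y‖⁻¹ • G y)⟫) x := by
  have hunit : ContinuousAt (fun y => ‖G y‖⁻¹ • G y) x :=
    (hG.continuousAt.norm.inv₀ (norm_ne_zero_iff.mpr hx)).smul hG.continuousAt
  exact hunit.inner ((hG.fderiv_right (zero_add _).le).continuousAt.clm_apply hunit)

section Gradient

variable {F : Type*} [NormedAddCommGroup F] [InnerProductSpace ℝ F] [CompleteSpace F]

theorem fderiv_fderiv_apply_eq_inner {v : F → ℝ} {x : F}
    (hG : DifferentiableAt ℝ (gradient v) x) (u w : F) :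
    fderiv ℝ (fun y => fderiv ℝ v y w) x u = ⟪fderiv ℝ (gradient v) x u, w⟫ := by
  have hfun : (fun y => fderiv ℝ v y w) = fun y => ⟪gradient v y, w⟫ :=
    funext fun y => inner_gradient_left.symm
  rw [hfun, (hG.hasFDerivAt.inner ℝ (hasFDerivAt_const w x)).fderiv]
  simp

theorem tendsto_one_sub_norm_gradient_sq_div {v : F → ℝ} {x₀ ν : F} (hν : ‖ν‖ = 1)
    (hv : DifferentiableAt ℝ v x₀) (hG : DifferentiableAt ℝ (gradient v) x₀)
    (hv0 : v x₀ = 0) (hgrad : gradient v x₀ = -ν) :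
    Tendsto (fun t : ℝ => (1 - ‖gradient v (x₀ - t • ν)‖ ^ 2) / v (x₀ - t • ν)) (𝓝[≠] 0)
      (𝓝 (-2 * ⟪fderiv ℝ (gradient v) x₀ ν, ν⟫)) := by
  have hnum : HasDerivAt (fun t : ℝ => 1 - ‖gradient v (x₀ - t • ν)‖ ^ 2)
      (-2 * ⟪fderiv ℝ (gradient v) x₀ ν, ν⟫) 0 := by
    have := ((hG.hasDerivAt_comp_sub_smul ν).norm_sq).const_sub 1
    rwa [zero_smul, sub_zero, hgrad, inner_neg_neg, real_inner_comm, ← neg_mul] at this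
  have hden : HasDerivAt (fun t : ℝ => v (x₀ - t • ν)) 1 0 := by
    have := hv.hasDerivAt_comp_sub_smul ν
    rwa [← inner_gradient_left, hgrad, inner_neg_left, neg_neg, real_inner_self_eq_norm_sq, hν,
      one_pow] at this
  simpa using tendsto_div_nhdsNE_of_hasDerivAt hnum hden (by simp [hgrad, hν])
    (by simpa using hv0) one_ne_zero

end Gradient

section Euclidean

variable {n : ℕ}

local notation "E" => EuclideanSpace ℝ (Fin n)

theorem gradient_apply_eq_fderiv_single (f : E → ℝ) (x : E) (i : Fin n) :
    gradient f x i = fderiv ℝ f x (EuclideanSpace.single i 1) := by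
  rw [← inner_gradient_left, EuclideanSpace.inner_single_right, one_mul, RCLike.conj_to_real]

theorem lap_eq_vdiv_gradient (f : E → ℝ) : lap f = vdiv (gradient f) := by
  ext x
  simp only [lap, vdiv, gradient_apply_eq_fderiv_single]

theorem ContDiffOn.gradient_of_isOpen {f : E → ℝ} {U : Set E} {k m : WithTop ℕ∞}
    (hf : ContDiffOn ℝ k f U) (hU : IsOpen U) (hmk : m + 1 ≤ k) :
    ContDiffOn ℝ m (gradient f) U := by
  refine contDiffOn_euclidean.mpr fun i => ?_
  simp only [gradient_apply_eq_fderiv_single]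
  exact (hf.fderiv_of_isOpen hU hmk).clm_apply contDiffOn_const

theorem DifferentiableAt.fderiv_apply_coord {G : E → E} {x : E} (hG : DifferentiableAt ℝ G x)
    (i : Fin n) (w : E) : fderiv ℝ (fun y => G y i) x w = fderiv ℝ G x w i :=
  congrArg (· w) ((PiLp.hasFDerivAt_apply 2 (G x) i).comp x hG.hasFDerivAt).fderiv

theorem vdiv_eq_sum_fderiv {G : E → E} {x : E} (hG : DifferentiableAt ℝ G x) :
    vdiv G x = ∑ i, fderiv ℝ G x (EuclideanSpace.single i 1) i := by
  simp only [vdiv, hG.fderiv_apply_coord]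

theorem vdiv_smul {φ : E → ℝ} {G : E → E} {x : E} (hφ : DifferentiableAt ℝ φ x)
    (hG : DifferentiableAt ℝ G x) :
    vdiv (fun y => φ y • G y) x = φ x * vdiv G x + fderiv ℝ φ x (G x) := by
  have hφG : HasFDerivAt (fun y => φ y • G y) _ x := hφ.hasFDerivAt.smul hG.hasFDerivAt
  rw [vdiv_eq_sum_fderiv hφG.differentiableAt, vdiv_eq_sum_fderiv hG, hφG.fderiv]
  conv_rhs => rw [← (EuclideanSpace.basisFun (Fin n) ℝ).sum_repr (G x), map_sum]
  simp [Finset.mul_sum, Finset.sum_add_distrib, mul_comm]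

theorem vdiv_normalize {G : E → E} {x : E} (hG : DifferentiableAt ℝ G x) (hx : G x ≠ 0) :
    vdiv (fun y => ‖G y‖⁻¹ • G y) x =
      (vdiv G x - ⟪‖G x‖⁻¹ • G x, fderiv ℝ G x (‖G x‖⁻¹ • G x)⟫) / ‖G x‖ := by
  rw [vdiv_smul (hG.hasFDerivAt.inv_norm hx).differentiableAt hG,
    (hG.hasFDerivAt.inv_norm hx).fderiv]
  simp only [neg_smul, neg_apply, smul_apply, ContinuousLinearMap.comp_apply, coe_innerSL_apply,
    smul_eq_mul, map_smul, inner_smul_right, inner_smul_left, map_inv₀, Real.ringHom_apply]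
  field_simp
  ring

end Euclidean

theorem mean_curvature_limit_at_free_boundary_general {n : ℕ} (α : ℝ)
    (ν x₀ : EuclideanSpace ℝ (Fin n)) (hν : ‖ν‖ = 1)
    (U : Set (EuclideanSpace ℝ (Fin n))) (hU : IsOpen U) (hx₀ : x₀ ∈ U)
    (v : EuclideanSpace ℝ (Fin n) → ℝ) (hv : ContDiffOn ℝ 2 v U)
    (hv0 : v x₀ = 0) (hgrad : gradient v x₀ = -ν)
    (t₀ : ℝ) (ht₀ : 0 < t₀)
    (h : ∀ t ∈ Set.Ioo (0 : ℝ) t₀,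
      x₀ - t • ν ∈ U ∧ 0 < v (x₀ - t • ν) ∧ gradient v (x₀ - t • ν) ≠ 0 ∧
      lap v (x₀ - t • ν) =
        (α / 2) * ((1 - ‖gradient v (x₀ - t • ν)‖ ^ 2) / v (x₀ - t • ν))) :
    Filter.Tendsto
      (fun t : ℝ => vdiv (fun y => ‖gradient v y‖⁻¹ • gradient v y) (x₀ - t • ν))
      (𝓝[>] (0 : ℝ))
      (𝓝 (-(1 + α) * fderiv ℝ (fun y => fderiv ℝ v y ν) x₀ ν)) := by
  set G := gradient v
  have hG : ContDiffOn ℝ 1 G U := hv.gradient_of_isOpen hU (by norm_num)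
  have hGx₀ : ContDiffAt ℝ 1 G x₀ := hG.contDiffAt (hU.mem_nhds hx₀)
  have hnorm : ‖G x₀‖ = 1 := by rw [hgrad, norm_neg, hν]
  have hne : G x₀ ≠ 0 := norm_ne_zero_iff.mp (by simp [hnorm])
  have hseg : Tendsto (fun t : ℝ => x₀ - t • ν) (𝓝[>] 0) (𝓝 x₀) :=
    ((continuous_const.sub (continuous_id.smul continuous_const)).tendsto' 0 x₀
      (by simp)).mono_left nhdsWithin_le_nhds
  have hlap : Tendsto (fun t : ℝ => lap v (x₀ - t • ν)) (𝓝[>] 0)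
      (𝓝 (α / 2 * (-2 * ⟪fderiv ℝ G x₀ ν, ν⟫))) := by
    refine (((tendsto_one_sub_norm_gradient_sq_div hν
      ((hv.contDiffAt (hU.mem_nhds hx₀)).differentiableAt two_ne_zero)
      (hGx₀.differentiableAt one_ne_zero) hv0 hgrad).mono_left
      (nhdsGT_le_nhdsNE 0)).const_mul (α / 2)).congr' ?_
    filter_upwards [Ioo_mem_nhdsGT ht₀] with t ht using (h t ht).2.2.2.symm
  have hlim := (hlap.sub ((hGx₀.continuousAt_inner_normalize_fderiv hne).tendsto.comp hseg)).div
    (hGx₀.continuousAt.norm.tendsto.comp hseg) (by simp [hnorm])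
  convert hlim.congr' ?_ using 2
  · rw [fderiv_fderiv_apply_eq_inner (hGx₀.differentiableAt one_ne_zero), hnorm, hgrad, inv_one,
      one_smul, map_neg, inner_neg_neg, real_inner_comm]
    ring
  · filter_upwards [Ioo_mem_nhdsGT ht₀] with t ht
    obtain ⟨hU', -, hne, -⟩ := h t ht
    simp only [Function.comp_apply, lap_eq_vdiv_gradient]
    exact (vdiv_normalize ((hG.contDiffAt (hU.mem_nhds hU')).differentiableAt one_ne_zero) hne).symm

/-- If `v` is `C²` near a free boundary point `x₀` with `v(x₀) = 0`, `∇v(x₀) = −ν`,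
`|ν| = 1`, and `v` solves `Δv = (α/2)(1 − |∇v|²)/v` (with `∇v ≠ 0`) on the inward
normal segment `{x₀ − tν : 0 < t < t₀}` where `v > 0`, then the mean curvature
`div(∇v/|∇v|)(x₀ − tν)` tends to `−(1+α) v_{νν}(x₀)` as `t → 0⁺`. -/
theorem mean_curvature_limit_at_free_boundary {n : ℕ} (α : ℝ) (hα : 0 ≤ α)
    (ν x₀ : EuclideanSpace ℝ (Fin n)) (hν : ‖ν‖ = 1)
    (U : Set (EuclideanSpace ℝ (Fin n))) (hU : IsOpen U) (hx₀ : x₀ ∈ U)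
    (v : EuclideanSpace ℝ (Fin n) → ℝ) (hv : ContDiffOn ℝ 2 v U)
    (hv0 : v x₀ = 0) (hgrad : gradient v x₀ = -ν)
    (t₀ : ℝ) (ht₀ : 0 < t₀)
    (h : ∀ t ∈ Set.Ioo (0 : ℝ) t₀,
      x₀ - t • ν ∈ U ∧ 0 < v (x₀ - t • ν) ∧ gradient v (x₀ - t • ν) ≠ 0 ∧
      lap v (x₀ - t • ν) =
        (α / 2) * ((1 - ‖gradient v (x₀ - t • ν)‖ ^ 2) / v (x₀ - t • ν))) :
    Filter.Tendsto
      (fun t : ℝ => vdiv (fun y => ‖gradient v y‖⁻¹ • gradient v y) (x₀ - t • ν))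
      (𝓝[>] (0 : ℝ))
      (𝓝 (-(1 + α) * fderiv ℝ (fun y => fderiv ℝ v y ν) x₀ ν)) :=
  mean_curvature_limit_at_free_boundary_general α ν x₀ hν U hU hx₀ v hv hv0 hgrad t₀ ht₀ h
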